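/- arXiv:1206.0154 — 3 statements merged into one kernel-verified Lean document; each statement's English description precedes it below -/
import Mathlib

section
/- There exists n₀ ∈ ℕ such that for every n ≥ n₀ and every real Δ with 20·ln n ≤ Δ ≤ n^{0.1}, setting η = ⌊n^{0.12}⌋, m = η⁸, and q = Δ/(2η), the following holds: for every natural number L < (Δ·ln n)/100 and every transmission schedule σ : Fin L → Finset (Fin η), the probability under μ that σ covers the random network is at most exp(−η⁶) = exp(−n^{0.72}). -/
/-!
Receivers are independent, so it suffices to show that one receiver, whose neighbourhood `N`
contains each sender independently with probability `q`, fails to hear some neighbour with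
probability at least `1/η²`; then `(1 - 1/η²)^(η⁸) ≤ exp(-η⁶)`. Since `2L ≤ η`, averaging over
the senders lying in no round of size `≤ 1` gives a sender `v` with
`∑_{t ∋ v} 1/(|σ_t| - 1) ≤ 4L/η ≤ q log η`. The receiver misses `v` as soon as `v ∈ N` and every
round containing `v` contains another member of `N`. These events are increasing, so by Harris'
inequality they occur together with probability at least
`q ∏_t (1 - (1-q)^(|σ_t|-1)) ≥ q ∏_t exp(-1/(q(|σ_t|-1))) ≥ q/η ≥ 1/η²`.
-/

open MeasureTheory

/-- The Bernoulli(q) measure on `Bool`: `true` has mass `q`, `false` has mass `1 - q`. -/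
noncomputable def bernoulliMeasure (q : ℝ) : Measure Bool :=
  ENNReal.ofReal q • Measure.dirac true + ENNReal.ofReal (1 - q) • Measure.dirac false

/-- The random bipartite graph measure: each potential edge `(u, s)` with
`u : Fin m` a receiver and `s : Fin η` a sender is present independently with
probability `q`. -/
noncomputable def randomGraphMeasure (m η : ℕ) (q : ℝ) :
    Measure (Fin m → Fin η → Bool) :=
  Measure.pi fun _ : Fin m => Measure.pi fun _ : Fin η => bernoulliMeasure q

/-- The neighborhood of receiver `u` in the adjacency function `A`. -/
def nbhd {m η : ℕ} (A : Fin m → Fin η → Bool) (u : Fin m) : Finset (Fin η) :=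
  Finset.univ.filter fun s => A u s = true

/-- A transmission schedule `σ` covers the network given by `A` if every
receiver `u` receives the message of each of its neighbors `v` in some round. -/
def Covers {m η L : ℕ} (σ : Fin L → Finset (Fin η)) (A : Fin m → Fin η → Bool) : Prop :=
  ∀ (u : Fin m) (v : Fin η), v ∈ nbhd A u → ∃ t : Fin L, σ t ∩ nbhd A u = {v}

open Finset Real
open scoped ENNReal

lemma bernoulliMeasure_singleton (q : ℝ) (b : Bool) :
    bernoulliMeasure q {b} = ENNReal.ofReal (if b then q else 1 - q) := by
  cases b <;> simp [bernoulliMeasure]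

lemma bernoulliMeasure_univ (q : ℝ) :
    bernoulliMeasure q Set.univ = ENNReal.ofReal q + ENNReal.ofReal (1 - q) := by
  simp [bernoulliMeasure]

instance (q : ℝ) : IsFiniteMeasure (bernoulliMeasure q) :=
  ⟨by rw [bernoulliMeasure_univ]; finiteness⟩

lemma isProbabilityMeasure_bernoulliMeasure {q : ℝ} (h0 : 0 ≤ q) (h1 : q ≤ 1) :
    IsProbabilityMeasure (bernoulliMeasure q) :=
  ⟨by rw [bernoulliMeasure_univ, ← ENNReal.ofReal_add h0 (sub_nonneg.2 h1)]; simp⟩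

noncomputable def bernoulliPi (ι : Type*) [Fintype ι] (q : ℝ) : Measure (ι → Bool) :=
  Measure.pi fun _ : ι => bernoulliMeasure q

def bernoulliWeight {ι : Type*} [Fintype ι] (q : ℝ) (B : ι → Bool) : ℝ :=
  ∏ i, if B i then q else 1 - q

instance (ι : Type*) [Fintype ι] (q : ℝ) : IsFiniteMeasure (bernoulliPi ι q) := by
  unfold bernoulliPi; infer_instance

lemma IsUpperSet.monotone_indicator_one {α M : Type*} [Preorder α] [Zero M] [One M] [Preorder M]
    [ZeroLEOneClass M] {S : Set α} (hS : IsUpperSet S) : Monotone (S.indicator (1 : α → M)) := by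
  intro a b hab
  by_cases ha : a ∈ S
  · simp [ha, hS hab ha]
  · simp [ha, Set.indicator_nonneg]

lemma isUpperSet_setOf_exists_eq_true {ι : Type*} (T : Finset ι) :
    IsUpperSet {B : ι → Bool | ∃ w ∈ T, B w = true} := by
  rintro a b hab ⟨w, hw, haw⟩
  exact ⟨w, hw, Bool.eq_true_of_true_le (haw ▸ hab w)⟩

section Harris

variable {ι : Type*} [Fintype ι] {q : ℝ}

lemma bernoulliWeight_mul_bernoulliWeight (a b : ι → Bool) :
    bernoulliWeight q a * bernoulliWeight q b
      = bernoulliWeight q (a ⊓ b) * bernoulliWeight q (a ⊔ b) := by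
  simp only [bernoulliWeight, ← prod_mul_distrib]
  refine prod_congr rfl fun i _ => ?_
  cases ha : a i <;> cases hb : b i <;> simp [ha, hb, mul_comm]

variable (h0 : 0 ≤ q) (h1 : q ≤ 1)
include h0 h1

lemma isProbabilityMeasure_bernoulliPi : IsProbabilityMeasure (bernoulliPi ι q) := by
  have := isProbabilityMeasure_bernoulliMeasure h0 h1
  unfold bernoulliPi; infer_instance

lemma bernoulliPi_real_singleton (B : ι → Bool) :
    (bernoulliPi ι q).real {B} = bernoulliWeight q B := by
  rw [measureReal_def, bernoulliPi, Measure.pi_singleton, ENNReal.toReal_prod, bernoulliWeight]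
  refine prod_congr rfl fun i _ => ?_
  rw [bernoulliMeasure_singleton, ENNReal.toReal_ofReal]
  split <;> linarith

lemma bernoulliPi_real_apply [DecidableEq ι] (S : Set (ι → Bool)) :
    (bernoulliPi ι q).real S = ∑ B, bernoulliWeight q B * S.indicator 1 B := by
  classical
  conv_lhs => rw [← S.coe_toFinset, ← sum_measureReal_singleton]
  simp only [bernoulliPi_real_singleton h0 h1, Set.indicator_apply, Pi.one_apply, mul_ite,
    mul_one, mul_zero]
  rw [← sum_filter, Set.filter_mem_univ_eq_toFinset]

lemma sum_bernoulliWeight [DecidableEq ι] : ∑ B : ι → Bool, bernoulliWeight q B = 1 := by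
  have := isProbabilityMeasure_bernoulliPi (ι := ι) h0 h1
  simpa using (bernoulliPi_real_apply (ι := ι) h0 h1 Set.univ).symm

lemma bernoulliWeight_nonneg : 0 ≤ bernoulliWeight (ι := ι) q :=
  fun _ => prod_nonneg fun i _ => by split <;> linarith

/-- Harris' inequality, from the FKG inequality for the log-modular weight. -/
theorem bernoulliPi_real_mul_le_inter [DecidableEq ι] {S T : Set (ι → Bool)}
    (hS : IsUpperSet S) (hT : IsUpperSet T) :
    (bernoulliPi ι q).real S * (bernoulliPi ι q).real T ≤ (bernoulliPi ι q).real (S ∩ T) := by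
  simp only [bernoulliPi_real_apply h0 h1, Set.inter_indicator_one, Pi.mul_apply]
  simpa only [sum_bernoulliWeight h0 h1, one_mul] using fkg _ _ _ (bernoulliWeight_nonneg h0 h1)
    (Set.indicator_nonneg (by simp)) (Set.indicator_nonneg (by simp))
    hS.monotone_indicator_one hT.monotone_indicator_one
    fun a b => (bernoulliWeight_mul_bernoulliWeight a b).le

theorem prod_bernoulliPi_real_le_biInter [DecidableEq ι] {κ : Type*} (R : Finset κ)
    {S : κ → Set (ι → Bool)} (hS : ∀ t ∈ R, IsUpperSet (S t)) :
    ∏ t ∈ R, (bernoulliPi ι q).real (S t) ≤ (bernoulliPi ι q).real (⋂ t ∈ R, S t) := by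
  classical
  have := isProbabilityMeasure_bernoulliPi (ι := ι) h0 h1
  induction R using Finset.cons_induction with
  | empty => simp
  | cons a R ha ih =>
    have hR : ∀ t ∈ R, IsUpperSet (S t) := fun t ht => hS t (mem_cons_of_mem ht)
    rw [prod_cons, cons_eq_insert, set_biInter_insert]
    calc _ ≤ (bernoulliPi ι q).real (S a) * (bernoulliPi ι q).real (⋂ t ∈ R, S t) :=
          mul_le_mul_of_nonneg_left (ih hR) measureReal_nonneg
      _ ≤ _ := bernoulliPi_real_mul_le_inter h0 h1 (hS a (mem_cons_self a R))
          (isUpperSet_iInter₂ hR)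

lemma bernoulliPi_real_exists_eq_true (T : Finset ι) :
    (bernoulliPi ι q).real {B | ∃ w ∈ T, B w = true} = 1 - (1 - q) ^ #T := by
  have := isProbabilityMeasure_bernoulliMeasure h0 h1
  have := isProbabilityMeasure_bernoulliPi (ι := ι) h0 h1
  have hset : {B : ι → Bool | ∃ w ∈ T, B w = true} = ((T : Set ι).pi fun _ => {false})ᶜ := by
    ext B; simp
  rw [hset, probReal_compl_eq_one_sub (Set.toFinite _).measurableSet, measureReal_def,
    bernoulliPi, Measure.pi_pi_finset]
  simp [bernoulliMeasure_singleton, h1]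

end Harris

lemma pos_of_one_le_mul_natCast {q : ℝ} {k : ℕ} (h : 1 ≤ q * k) : 0 < q ∧ 0 < k := by
  rcases k.eq_zero_or_pos with rfl | hk
  · simp at h; linarith
  · exact ⟨pos_of_mul_pos_left (by linarith) (Nat.cast_nonneg k), hk⟩

lemma exp_neg_inv_le_one_sub_exp_neg {x : ℝ} (hx : 0 < x) : exp (-x⁻¹) ≤ 1 - exp (-x) := by
  have hexp : ∀ y : ℝ, 0 < y → exp (-y) ≤ (1 + y)⁻¹ := fun y hy => by
    rw [exp_neg]; exact inv_anti₀ (by positivity) (by linarith [add_one_le_exp y])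
  have hsum : (1 + x⁻¹)⁻¹ + (1 + x)⁻¹ = 1 := by field_simp; ring
  linarith [hexp x hx, hexp x⁻¹ (inv_pos.2 hx)]

lemma exp_neg_inv_le_one_sub_pow {q : ℝ} (hq0 : 0 < q) (hq1 : q ≤ 1) {c : ℕ} (hc : 0 < c) :
    exp (-(q * c)⁻¹) ≤ 1 - (1 - q) ^ c := by
  have hpow : (1 - q) ^ c ≤ exp (-(q * c)) := by
    calc (1 - q) ^ c ≤ exp (-q) ^ c :=
          pow_le_pow_left₀ (sub_nonneg.2 hq1) (one_sub_le_exp_neg q) c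
      _ = exp (-(q * c)) := by rw [← exp_nat_mul]; ring_nf
  linarith [exp_neg_inv_le_one_sub_exp_neg (x := q * c) (by positivity)]

lemma one_div_sq_le_mul_prod_one_sub_pow {τ : Type*} {R : Finset τ} {c : τ → ℕ} {q : ℝ} {k : ℕ}
    (hq1 : q ≤ 1) (hqk : 1 ≤ q * k) (hc : ∀ t ∈ R, 0 < c t)
    (hsum : ∑ t ∈ R, ((c t : ℝ))⁻¹ ≤ q * log k) :
    1 / k ^ 2 ≤ q * ∏ t ∈ R, (1 - (1 - q) ^ c t) := by
  obtain ⟨hq0, hk⟩ := pos_of_one_le_mul_natCast hqk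
  have hk' : (0 : ℝ) < k := Nat.cast_pos.2 hk
  have hsum' : ∑ t ∈ R, (q * c t)⁻¹ ≤ log k := by
    simp_rw [mul_inv, ← mul_sum]
    rw [inv_mul_le_iff₀ hq0]; exact hsum
  calc 1 / (k : ℝ) ^ 2 ≤ q * (k : ℝ)⁻¹ := by
        rw [one_div, pow_two, mul_inv]
        exact mul_le_mul_of_nonneg_right ((inv_le_iff_one_le_mul₀ hk').2 hqk) (by positivity)
    _ = q * exp (-log k) := by rw [exp_neg, exp_log hk']
    _ ≤ q * ∏ t ∈ R, exp (-(q * c t)⁻¹) := by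
        rw [← exp_sum, sum_neg_distrib]
        gcongr
    _ ≤ q * ∏ t ∈ R, (1 - (1 - q) ^ c t) := by
        gcongr with t ht
        exact exp_neg_inv_le_one_sub_pow hq0 hq1 (hc t ht)

section Selection

open Fintype

variable {V τ : Type*} [Fintype V] [DecidableEq V] [Fintype τ]

lemma natCast_mul_inv_natCast_sub_one_le_two (c : ℕ) : (c : ℝ) * ((c : ℝ) - 1)⁻¹ ≤ 2 := by
  rcases c with _ | _ | c
  · simp
  · simp -- `(0 : ℝ)⁻¹ = 0`
  · rw [← div_eq_mul_inv, div_le_iff₀ (by push_cast; linarith)]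
    push_cast; linarith

lemma sum_sum_inv_card_sub_one_le (σ : τ → Finset V) :
    ∑ v, ∑ t with v ∈ σ t, ((#(σ t) : ℝ) - 1)⁻¹ ≤ 2 * card τ := by
  simp only [sum_filter]
  rw [sum_comm]
  calc ∑ t, ∑ v, (if v ∈ σ t then ((#(σ t) : ℝ) - 1)⁻¹ else 0)
      = ∑ t, (#(σ t) : ℝ) * ((#(σ t) : ℝ) - 1)⁻¹ := by
        refine sum_congr rfl fun t _ => ?_
        rw [← sum_filter, filter_univ_mem, sum_const, nsmul_eq_mul]
    _ ≤ ∑ _t : τ, (2 : ℝ) := sum_le_sum fun t _ => natCast_mul_inv_natCast_sub_one_le_two _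
    _ = 2 * card τ := by rw [sum_const, nsmul_eq_mul, card_univ, mul_comm]

lemma card_filter_not_forall_two_le_card_le (σ : τ → Finset V) :
    #{v | ¬∀ t, v ∈ σ t → 2 ≤ #(σ t)} ≤ card τ := by
  classical
  calc #{v | ¬∀ t, v ∈ σ t → 2 ≤ #(σ t)}
      ≤ #(({t | #(σ t) < 2} : Finset τ).biUnion σ) :=
        card_le_card fun v hv => by simpa [and_comm] using hv
    _ ≤ ∑ t with #(σ t) < 2, #(σ t) := card_biUnion_le
    _ ≤ ∑ t with #(σ t) < 2, 1 := sum_le_sum fun t ht => by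
        have := (mem_filter.1 ht).2; omega
    _ ≤ card τ := by rw [sum_const, smul_eq_mul, mul_one]; exact card_filter_le _ _

theorem exists_forall_two_le_card_and_sum_inv_le (σ : τ → Finset V) (hV : 0 < card V)
    (hτ : 2 * card τ ≤ card V) :
    ∃ v, (∀ t, v ∈ σ t → 2 ≤ #(σ t)) ∧
      ∑ t with v ∈ σ t, ((#(σ t) : ℝ) - 1)⁻¹ ≤ 4 * card τ / card V := by
  set G : Finset V := {v | ∀ t, v ∈ σ t → 2 ≤ #(σ t)}
  have hG : (card V : ℝ) ≤ 2 * #G := by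
    have hsplit : #G + #{v | ¬∀ t, v ∈ σ t → 2 ≤ #(σ t)} = card V :=
      card_filter_add_card_filter_not _
    have := card_filter_not_forall_two_le_card_le σ
    exact_mod_cast (by omega : card V ≤ 2 * #G)
  have hVpos : (0 : ℝ) < card V := by exact_mod_cast hV
  have hGne : G.Nonempty := card_pos.1 (by exact_mod_cast (by linarith : (0 : ℝ) < #G))
  have hnonneg : ∀ v, 0 ≤ ∑ t with v ∈ σ t, ((#(σ t) : ℝ) - 1)⁻¹ := fun v =>
    sum_nonneg fun t ht => inv_nonneg.2 <| sub_nonneg.2 <|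
      Nat.one_le_cast.2 (card_pos.2 ⟨v, (mem_filter.1 ht).2⟩)
  obtain ⟨v, hvG, hv⟩ := exists_le_of_sum_le hGne <|
    calc ∑ v ∈ G, ∑ t with v ∈ σ t, ((#(σ t) : ℝ) - 1)⁻¹
        ≤ ∑ v, ∑ t with v ∈ σ t, ((#(σ t) : ℝ) - 1)⁻¹ :=
          sum_le_sum_of_subset_of_nonneg (subset_univ G) fun v _ _ => hnonneg v
      _ ≤ 2 * card τ := sum_sum_inv_card_sub_one_le σ
      _ ≤ ∑ _v ∈ G, 4 * (card τ : ℝ) / card V := by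
          rw [sum_const, nsmul_eq_mul, mul_div_assoc', le_div_iff₀ hVpos]
          nlinarith [(card τ).cast_nonneg (α := ℝ)]
  exact ⟨v, (mem_filter.1 hvG).2, hv⟩

end Selection

def Hears {ι τ : Type*} [DecidableEq ι] (σ : τ → Finset ι) (N : Finset ι) : Prop :=
  ∀ v ∈ N, ∃ t, σ t ∩ N = {v}

section Receiver

variable {ι τ : Type*} [DecidableEq ι]

lemma not_hears_of_forall_exists_mem_erase {σ : τ → Finset ι} {N : Finset ι} {v : ι}
    (hv : v ∈ N) (h : ∀ t, v ∈ σ t → ∃ w ∈ (σ t).erase v, w ∈ N) : ¬Hears σ N := by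
  intro hN
  obtain ⟨t, ht⟩ := hN v hv
  have hvt : v ∈ σ t := (mem_inter.1 (ht ▸ mem_singleton_self v)).1
  obtain ⟨w, hw, hwN⟩ := h t hvt
  have hwt : w ∈ σ t ∩ N := mem_inter.2 ⟨mem_of_mem_erase hw, hwN⟩
  rw [ht, mem_singleton] at hwt
  exact ne_of_mem_erase hw hwt

variable [Fintype ι] [Fintype τ]

open Fintype in
theorem one_div_sq_le_bernoulliPi_real_not_hears (σ : τ → Finset ι) {q : ℝ} (hq1 : q ≤ 1)
    (hqk : 1 ≤ q * card ι) (hτ : 2 * card τ ≤ card ι)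
    (hbud : 4 * card τ ≤ q * card ι * log (card ι)) :
    1 / (card ι : ℝ) ^ 2 ≤ (bernoulliPi ι q).real {B | ¬Hears σ {s | B s = true}} := by
  obtain ⟨hq0, hk⟩ := pos_of_one_le_mul_natCast hqk
  obtain ⟨v, hv2, hvS⟩ := exists_forall_two_le_card_and_sum_inv_le σ hk hτ
  set R : Finset τ := {t | v ∈ σ t}
  have hcard : ∀ t ∈ R, (#((σ t).erase v) : ℝ) = #(σ t) - 1 := fun t ht => by
    rw [card_erase_of_mem (mem_filter.1 ht).2, Nat.cast_sub (card_pos.2 ⟨v, (mem_filter.1 ht).2⟩),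
      Nat.cast_one]
  have hpos : ∀ t ∈ R, 0 < #((σ t).erase v) := fun t ht => by
    have := hv2 t (mem_filter.1 ht).2
    rw [card_erase_of_mem (mem_filter.1 ht).2]; omega
  have hsum : ∑ t ∈ R, (#((σ t).erase v) : ℝ)⁻¹ ≤ q * log (card ι) := by
    rw [Finset.sum_congr rfl fun t ht => by rw [hcard t ht]]
    refine hvS.trans ?_
    rwa [div_le_iff₀ (Nat.cast_pos.2 hk), mul_right_comm]
  have hupper : ∀ t ∈ R, IsUpperSet {B : ι → Bool | ∃ w ∈ (σ t).erase v, B w = true} :=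
    fun t _ => isUpperSet_setOf_exists_eq_true _
  calc 1 / (card ι : ℝ) ^ 2 ≤ q * ∏ t ∈ R, (1 - (1 - q) ^ #((σ t).erase v)) :=
        one_div_sq_le_mul_prod_one_sub_pow hq1 hqk hpos hsum
    _ = (bernoulliPi ι q).real {B | B v = true} *
          ∏ t ∈ R, (bernoulliPi ι q).real {B | ∃ w ∈ (σ t).erase v, B w = true} := by
        have hv : (bernoulliPi ι q).real {B | B v = true} = q := by
          simpa using bernoulliPi_real_exists_eq_true hq0.le hq1 {v}
        simp only [hv, bernoulliPi_real_exists_eq_true hq0.le hq1]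
    _ ≤ (bernoulliPi ι q).real {B | B v = true} *
          (bernoulliPi ι q).real (⋂ t ∈ R, {B | ∃ w ∈ (σ t).erase v, B w = true}) := by
        gcongr
        exact prod_bernoulliPi_real_le_biInter hq0.le hq1 R hupper
    _ ≤ (bernoulliPi ι q).real
          ({B | B v = true} ∩ ⋂ t ∈ R, {B | ∃ w ∈ (σ t).erase v, B w = true}) :=
        bernoulliPi_real_mul_le_inter hq0.le hq1
          (by simpa using isUpperSet_setOf_exists_eq_true {v}) (isUpperSet_iInter₂ hupper)
    _ ≤ (bernoulliPi ι q).real {B | ¬Hears σ {s | B s = true}} := by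
        refine measureReal_mono (fun B ⟨hBv, hB⟩ => ?_)
        refine not_hears_of_forall_exists_mem_erase (by simpa using hBv) fun t ht => ?_
        simpa using Set.mem_iInter₂.1 hB t (mem_filter.2 ⟨mem_univ t, ht⟩)

end Receiver

open Fintype in
theorem bernoulliPi_hears_le {ι τ : Type*} [Fintype ι] [DecidableEq ι] [Fintype τ]
    (σ : τ → Finset ι) {q : ℝ} (hq1 : q ≤ 1) (hqk : 1 ≤ q * card ι)
    (hτ : 2 * card τ ≤ card ι) (hbud : 4 * card τ ≤ q * card ι * log (card ι)) :
    bernoulliPi ι q {B | Hears σ {s | B s = true}} ≤ ENNReal.ofReal (1 - 1 / (card ι : ℝ) ^ 2) := by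
  have hq0 := (pos_of_one_le_mul_natCast hqk).1
  have := isProbabilityMeasure_bernoulliPi (ι := ι) hq0.le hq1
  have hcompl := probReal_compl_eq_one_sub (μ := bernoulliPi ι q)
    (Set.toFinite {B : ι → Bool | Hears σ {s | B s = true}}).measurableSet
  have hlow := one_div_sq_le_bernoulliPi_real_not_hears σ hq1 hqk hτ hbud
  rw [← ofReal_measureReal]
  exact ENNReal.ofReal_le_ofReal (by rw [Set.compl_ofPred] at hcompl; linarith)

lemma randomGraphMeasure_setOf_covers (m η L : ℕ) (σ : Fin L → Finset (Fin η)) (q : ℝ) :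
    randomGraphMeasure m η q {A | Covers σ A}
      = bernoulliPi (Fin η) q {B | Hears σ {s | B s = true}} ^ m := by
  have hset : {A | Covers σ A} = Set.univ.pi fun _ : Fin m => {B | Hears σ {s | B s = true}} := by
    ext A; simp only [Set.mem_ofPred_eq, Set.mem_pi, Set.mem_univ, true_imp_iff]; rfl
  rw [hset, randomGraphMeasure, Measure.pi_pi, prod_const, card_univ, Fintype.card_fin]
  rfl

lemma half_le_natFloor {x : ℝ} (hx : 2 ≤ x) : x / 2 ≤ ⌊x⌋₊ := by
  linarith [Nat.sub_one_lt_floor x]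

lemma log_le_hundred_mul_rpow {x : ℝ} (hx : 0 ≤ x) : log x ≤ 100 * x ^ (0.01 : ℝ) := by
  have := log_le_rpow_div hx (by norm_num : (0 : ℝ) < 0.01)
  rwa [div_eq_mul_inv, mul_comm, show (0.01 : ℝ)⁻¹ = 100 by norm_num] at this

open Filter in
lemma eventually_two_hundred_le_log_and_four_le_rpow :
    ∀ᶠ n : ℕ in atTop, 200 ≤ log n ∧ 4 ≤ (n : ℝ) ^ (0.01 : ℝ) := by
  have h := tendsto_natCast_atTop_atTop (R := ℝ)
  exact ((tendsto_log_atTop.comp h).eventually_ge_atTop 200).and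
    (((tendsto_rpow_atTop (by norm_num)).comp h).eventually_ge_atTop 4)

lemma schedule_parameters {n η L : ℕ} {Δ : ℝ} (hlog : 200 ≤ log n)
    (hroot : 4 ≤ (n : ℝ) ^ (0.01 : ℝ)) (hΔ₁ : 20 * log n ≤ Δ) (hΔ₂ : Δ ≤ (n : ℝ) ^ (0.1 : ℝ))
    (hη : η = ⌊(n : ℝ) ^ (0.12 : ℝ)⌋₊) (hL : (L : ℝ) < Δ * log n / 100) :
    Δ / (2 * η) ≤ 1 ∧ 1 ≤ Δ / (2 * η) * η ∧ 2 * L ≤ η ∧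
      4 * L ≤ Δ / (2 * η) * η * log η := by
  have hn : (1 : ℝ) ≤ n := by
    rcases n.eq_zero_or_pos with rfl | hn
    · norm_num at hroot
    · exact Nat.one_le_cast.2 hn
  have hn0 : (0 : ℝ) < n := by linarith
  have hsplit : ∀ a b : ℝ, (n : ℝ) ^ a * (n : ℝ) ^ b = (n : ℝ) ^ (a + b) := fun a b =>
    (rpow_add hn0 a b).symm
  have hL' : (L : ℝ) ≤ (n : ℝ) ^ (0.11 : ℝ) := by
    have := hsplit 0.1 0.01
    nlinarith [log_le_hundred_mul_rpow hn0.le, rpow_nonneg hn0.le (0.1 : ℝ)]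
  have h12 : 4 * (n : ℝ) ^ (0.11 : ℝ) ≤ (n : ℝ) ^ (0.12 : ℝ) := by
    have := hsplit 0.11 0.01
    nlinarith [rpow_nonneg hn0.le (0.11 : ℝ)]
  have hn1 : (1 : ℝ) ≤ n ^ (0.11 : ℝ) := one_le_rpow hn (by norm_num)
  have hηlo : (n : ℝ) ^ (0.12 : ℝ) / 2 ≤ η := hη ▸ half_le_natFloor (by linarith)
  have hηhi : (η : ℝ) ≤ (n : ℝ) ^ (0.12 : ℝ) := hη ▸ Nat.floor_le (by positivity)
  have hηpos : (0 : ℝ) < η := by linarith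
  have hqη : Δ / (2 * η) * η = Δ / 2 := by field_simp
  have hlogη : 0.08 * log n ≤ log η := by
    have := log_le_log (by positivity) hηlo
    rw [log_div (by positivity) two_ne_zero, log_rpow hn0] at this
    linarith [log_two_lt_d9]
  refine ⟨?_, ?_, ?_, ?_⟩
  · rw [div_le_one (by positivity)]
    linarith [rpow_le_rpow_of_exponent_le hn (by norm_num : (0.1 : ℝ) ≤ 0.12)]
  · rw [hqη]; linarith
  · exact_mod_cast (by linarith : (2 * L : ℝ) ≤ η)
  · rw [hqη]; nlinarith

lemma ofReal_one_sub_one_div_sq_pow_le (k : ℕ) :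
    ENNReal.ofReal (1 - 1 / (k : ℝ) ^ 2) ^ (k ^ 8) ≤ ENNReal.ofReal (exp (-(k : ℝ) ^ 6)) := by
  rcases k.eq_zero_or_pos with rfl | hk
  · simp
  have hle : 1 / (k : ℝ) ^ 2 ≤ 1 :=
    div_le_one_of_le₀ (one_le_pow₀ (Nat.one_le_cast.2 hk)) (by positivity)
  have hdiv : 1 / (k : ℝ) ^ 2 = (k : ℝ) ^ 6 / ((k ^ 8 : ℕ) : ℝ) := by
    push_cast; field_simp
  have hpow : (k : ℝ) ^ 6 ≤ ((k ^ 8 : ℕ) : ℝ) := by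
    exact_mod_cast Nat.pow_le_pow_right hk (by norm_num)
  rw [← ENNReal.ofReal_pow (sub_nonneg.2 hle), hdiv]
  exact ENNReal.ofReal_le_ofReal (one_sub_div_pow_le_exp_neg hpow)

/-- **Coverage probability of a single short schedule.**
For large `n` and `20·ln n ≤ Δ ≤ n^0.1`, with `η = ⌊n^0.12⌋`, `m = η⁸`, and
`q = Δ/(2η)`: for every length `L < Δ·ln n/100` and every transmission schedule
`σ : Fin L → Finset (Fin η)`, the probability that `σ` covers the random
network is at most `exp(−η⁶)`. -/
theorem single_schedule_coverage_probability :
    ∃ n₀ : ℕ, ∀ n : ℕ, n ≥ n₀ → ∀ Δ : ℝ,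
      20 * Real.log n ≤ Δ → Δ ≤ (n : ℝ) ^ (0.1 : ℝ) →
      ∀ η m : ℕ, η = ⌊(n : ℝ) ^ (0.12 : ℝ)⌋₊ → m = η ^ 8 →
      ∀ (L : ℕ), (L : ℝ) < Δ * Real.log n / 100 →
      ∀ σ : Fin L → Finset (Fin η),
        randomGraphMeasure m η (Δ / (2 * η)) {A | Covers σ A} ≤
          ENNReal.ofReal (Real.exp (-((η : ℝ) ^ 6))) := by
  obtain ⟨n₀, hn₀⟩ := Filter.eventually_atTop.1 eventually_two_hundred_le_log_and_four_le_rpow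
  refine ⟨n₀, fun n hn Δ hΔ₁ hΔ₂ η m hη hm L hL σ => ?_⟩
  obtain ⟨hlog, hroot⟩ := hn₀ n hn
  obtain ⟨hq1, hqη, hLη, hbud⟩ := schedule_parameters hlog hroot hΔ₁ hΔ₂ hη hL
  have hreceiver := bernoulliPi_hears_le σ hq1 (by simpa using hqη) (by simpa using hLη)
    (by simpa using hbud)
  rw [randomGraphMeasure_setOf_covers, hm]
  calc _ ≤ ENNReal.ofReal (1 - 1 / (Fintype.card (Fin η) : ℝ) ^ 2) ^ η ^ 8 :=
        pow_le_pow_left' hreceiver _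
    _ ≤ _ := by simpa using ofReal_one_sub_one_div_sq_pow_le η
end

section
/- Let S be a nonempty finite set and let σ : Fin L → Finset S be a transmission schedule with L < |S|/2. Then there exists a sender s ∈ S that is not lost in σ (no round t has σ_t = {s}) and whose potential satisfies Φ_σ(s) ≤ 2L/|S|. -/
/-!
Each round isolates at most one sender, so at most `L` senders are lost; and every round
distributes a total potential of at most `1` among its transmitters, so the potentials sum to
at most `L`. More than `|S|/2` senders are not lost, hence the least potential among them is at
most `L / (|S|/2) = 2L/|S|`.
-/

open Finset

section Schedule

variable {S : Type*} [DecidableEq S] {L : ℕ} (σ : Fin L → Finset S)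

noncomputable def potential (s : S) : ℝ :=
  ∑ t ∈ univ.filter (fun t : Fin L => s ∈ σ t), (1 : ℝ) / (σ t).card

theorem potential_nonneg (s : S) : 0 ≤ potential σ s :=
  sum_nonneg fun _ _ => by positivity

variable [Fintype S]

def lostSenders : Finset S := univ.filter fun s => ∃ t, σ t = {s}

theorem card_lostSenders_le : (lostSenders σ).card ≤ L := by
  have h_image : (lostSenders σ).image ({·}) ⊆ univ.image σ := by
    intro x hx
    obtain ⟨s, hs, rfl⟩ := mem_image.mp hx
    obtain ⟨t, ht⟩ := (mem_filter.mp hs).2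
    exact mem_image.mpr ⟨t, mem_univ t, ht⟩
  calc (lostSenders σ).card
      = ((lostSenders σ).image ({·})).card := (card_image_of_injective _ singleton_injective).symm
    _ ≤ (univ.image σ).card := card_le_card h_image
    _ ≤ L := card_image_le.trans (card_fin L).le

theorem sum_potential_eq : ∑ s, potential σ s = ∑ t, ∑ _s ∈ σ t, (1 : ℝ) / (σ t).card := by
  simp only [potential, sum_filter]
  rw [sum_comm]
  refine sum_congr rfl fun t _ => ?_
  rw [← sum_filter, filter_univ_mem]

theorem sum_potential_le : ∑ s, potential σ s ≤ L := by
  rw [sum_potential_eq]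
  calc ∑ t, ∑ _s ∈ σ t, (1 : ℝ) / (σ t).card ≤ ∑ _t : Fin L, (1 : ℝ) := by
        refine sum_le_sum fun t _ => ?_
        rw [sum_const, nsmul_eq_mul, mul_one_div]
        exact div_self_le_one _
    _ = L := by simp

end Schedule

theorem exists_not_lost_low_potential_general
    {S : Type*} [Fintype S] [DecidableEq S]
    {L : ℕ} (σ : Fin L → Finset S)
    (hL : (L : ℝ) < (Fintype.card S : ℝ) / 2) :
    ∃ s : S, (∀ t : Fin L, σ t ≠ {s}) ∧
      (∑ t ∈ Finset.univ.filter (fun t : Fin L => s ∈ σ t),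
          (1 : ℝ) / (σ t).card) ≤
        2 * L / Fintype.card S := by
  set n := Fintype.card S
  set B := (lostSenders σ)ᶜ
  have h_card_B : (n : ℝ) - L ≤ B.card := by
    have h := card_compl_add_card (lostSenders σ)
    have h_lost : ((lostSenders σ).card : ℝ) ≤ L := by exact_mod_cast card_lostSenders_le σ
    have h_cast : (B.card : ℝ) + (lostSenders σ).card = n := by exact_mod_cast h
    linarith
  have h_L_nonneg : (0 : ℝ) ≤ L := L.cast_nonneg
  have h_n_pos : (0 : ℝ) < n := by linarith
  have h_B_nonempty : B.Nonempty := card_pos.mp (by exact_mod_cast (by linarith : (0 : ℝ) < B.card))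
  have h_sum : ∑ s ∈ B, potential σ s ≤ ∑ _s ∈ B, 2 * (L : ℝ) / n := by
    rw [sum_const, nsmul_eq_mul]
    calc ∑ s ∈ B, potential σ s ≤ ∑ s, potential σ s :=
          sum_le_sum_of_subset_of_nonneg (subset_univ B) fun s _ _ => potential_nonneg σ s
      _ ≤ L := sum_potential_le σ
      _ = (n / 2) * (2 * L / n) := by field_simp
      _ ≤ B.card * (2 * L / n) := by gcongr; linarith
  obtain ⟨s, hs_B, hs⟩ := exists_le_of_sum_le h_B_nonempty h_sum
  refine ⟨s, fun t ht => ?_, hs⟩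
  exact mem_compl.mp hs_B (mem_filter.mpr ⟨mem_univ s, t, ht⟩)

/-- **Existence of a not-lost sender with small potential.**
If `S` is a nonempty finite set of senders and `σ : Fin L → Finset S` is a
transmission schedule with `L < |S|/2`, then there is a sender `s` that is not
lost (no round has `σ_t = {s}`) whose potential
`Φ_σ(s) = Σ_{t : s ∈ σ_t} 1/|σ_t|` is at most `2L/|S|`. -/
theorem exists_not_lost_low_potential
    {S : Type*} [Fintype S] [DecidableEq S] [Nonempty S]
    {L : ℕ} (σ : Fin L → Finset S)
    (hL : (L : ℝ) < (Fintype.card S : ℝ) / 2) :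
    ∃ s : S, (∀ t : Fin L, σ t ≠ {s}) ∧
      (∑ t ∈ Finset.univ.filter (fun t : Fin L => s ∈ σ t),
          (1 : ℝ) / (σ t).card) ≤
        2 * L / Fintype.card S :=
  exists_not_lost_low_potential_general σ hL
end

section
/- For every natural number k ≥ 1 and every real p with 1/(2k) ≤ p ≤ 1/k, we have p·(1 − p)^{k−1} ≥ 1/(2·e·k). -/
open Real

/- With `p = 1/k` the factor `(1 - p)^(k-1) = (1 + 1/(k-1))^-(k-1)` is at least `1/e`, because
`(1 + 1/n)^n ≤ e`; smaller `p` only increase it. Together with `p ≥ 1/(2k)` this gives the bound. -/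

lemma exp_neg_one_le_one_sub_inv_pow (n : ℕ) : exp (-1) ≤ (1 - ((n : ℝ) + 1)⁻¹) ^ n := by
  rcases eq_or_ne n 0 with rfl | hn
  · simp
  have hbase : 1 - ((n : ℝ) + 1)⁻¹ = (1 + (n : ℝ)⁻¹)⁻¹ := by field_simp; ring
  rw [hbase, inv_pow, exp_neg]
  exact inv_anti₀ (by positivity) one_add_inv_pow_le_exp

lemma exp_neg_one_le_one_sub_pow {p : ℝ} (n : ℕ) (hp : p ≤ ((n : ℝ) + 1)⁻¹) :
    exp (-1) ≤ (1 - p) ^ n := by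
  have hbase : 0 ≤ 1 - ((n : ℝ) + 1)⁻¹ := sub_nonneg.2 (inv_le_one_of_one_le₀ (by simp))
  calc exp (-1) ≤ (1 - ((n : ℝ) + 1)⁻¹) ^ n := exp_neg_one_le_one_sub_inv_pow n
    _ ≤ (1 - p) ^ n := pow_le_pow_left₀ hbase (by linarith) n

/-- **Single-round success estimate of the Decay strategy.**
For every natural `k ≥ 1` and real `p` with `1/(2k) ≤ p ≤ 1/k`,
`p·(1 − p)^{k−1} ≥ 1/(2·e·k)`. -/
theorem decay_single_round_success (k : ℕ) (hk : 1 ≤ k) (p : ℝ)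
    (hp1 : 1 / (2 * k) ≤ p) (hp2 : p ≤ 1 / k) :
    1 / (2 * Real.exp 1 * k) ≤ p * (1 - p) ^ (k - 1) := by
  obtain ⟨n, rfl⟩ := Nat.exists_eq_add_of_le' hk
  have hp0 : 0 ≤ p := le_trans (by positivity) hp1
  rw [Nat.add_sub_cancel]
  push_cast at hp1 hp2 ⊢
  calc 1 / (2 * exp 1 * (n + 1)) = 1 / (2 * (n + 1)) * exp (-1) := by
        rw [exp_neg]; field_simp
    _ ≤ p * (1 - p) ^ n :=
        mul_le_mul hp1 (exp_neg_one_le_one_sub_pow n (by simpa using hp2)) (exp_pos _).le hp0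
end
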